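/- Let T be a tree of order n ≥ 5. Then sdiam_3(T) = 3 if and only if T is a star K_{1,n−1}. -/

import Mathlib

/-!
In a tree, a connected subgraph containing the two ends of a path contains the whole path, and a
connected subgraph on `n` vertices has at least `n - 1` edges. For a star with centre `c`, the
spokes to any three vertices form a connected subgraph with at most three edges, while a
connected subgraph containing three leaves also contains `c`, hence has at least three edges.
If the tree is not a star, it contains a path `u a b v`; for any fifth vertex `w`, a connected
subgraph containing `u, v, w` contains all five vertices `u, a, b, v, w`, so the Steiner
distance of `{u, v, w}` is at least four.
-/

open SimpleGraph

/-- The Steiner distance of a vertex set `S` in a graph `G`: the minimum number of edges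
of a connected subgraph of `G` whose vertex set contains `S`. -/
noncomputable def steinerDist {V : Type*} (G : SimpleGraph V) (S : Set V) : ℕ :=
  sInf {m : ℕ | ∃ H : G.Subgraph, H.Connected ∧ S ⊆ H.verts ∧ H.edgeSet.ncard = m}

/-- The Steiner `k`-diameter of `G`: the maximum Steiner distance over all `k`-element
vertex subsets. -/
noncomputable def sdiam {V : Type*} [Fintype V] (G : SimpleGraph V) (k : ℕ) : ℕ :=
  sSup {m : ℕ | ∃ S : Finset V, S.card = k ∧ steinerDist G ↑S = m}

/-- The maximum degree of `G`. -/
noncomputable def maxDeg {V : Type*} [Fintype V] (G : SimpleGraph V) : ℕ :=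
  Finset.univ.sup fun v => (G.neighborSet v).ncard

/-- The minimum degree of `G`. -/
noncomputable def minDeg {V : Type*} [Fintype V] (G : SimpleGraph V) : ℕ :=
  sInf {d : ℕ | ∃ v : V, (G.neighborSet v).ncard = d}

/-- `e3 n ℓ d` : minimum number of edges of a graph of order `n` with maximum degree `ℓ`
and Steiner 3-diameter at most `d` (`⊤` if no such graph exists). -/
noncomputable def e3 (n ℓ d : ℕ) : ℕ∞ :=
  sInf {m : ℕ∞ | ∃ G : SimpleGraph (Fin n),
    maxDeg G = ℓ ∧ sdiam G 3 ≤ d ∧ (G.edgeSet.ncard : ℕ∞) = m}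

namespace SimpleGraph

variable {V : Type*} {G : SimpleGraph V}

lemma Subgraph.Connected.ncard_verts_le_ncard_edgeSet_add_one {H : G.Subgraph}
    (hH : H.Connected) : H.verts.ncard ≤ H.edgeSet.ncard + 1 := by
  rw [← H.image_coe_edgeSet_coe,
    Set.ncard_image_of_injective _ (Sym2.map.injective Subtype.val_injective),
    ← Nat.card_coe_set_eq, ← Nat.card_coe_set_eq]
  exact hH.coe.card_vert_le_card_edgeSet_add_one

lemma Connected.connected_subgraph_top (hG : G.Connected) : (⊤ : G.Subgraph).Connected := by
  rw [Subgraph.connected_iff_forall_exists_walk_subgraph]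
  exact ⟨⟨hG.nonempty.some, trivial⟩, fun _ _ => ⟨(hG.preconnected _ _).some, le_top⟩⟩

lemma IsAcyclic.support_subset_verts (hG : G.IsAcyclic) {H : G.Subgraph} (hH : H.Connected)
    {u v : V} {p : G.Walk u v} (hp : p.IsPath) (hu : u ∈ H.verts) (hv : v ∈ H.verts) :
    {x | x ∈ p.support} ⊆ H.verts := by
  classical
  obtain ⟨q, hq⟩ :=
    (Subgraph.preconnected_iff_forall_exists_walk_subgraph H).mp hH.preconnected hu hv
  obtain rfl : p = q.bypass := congrArg Subtype.val <|
    (hG.subsingleton_path u v).elim ⟨p, hp⟩ ⟨q.bypass, q.bypass_isPath⟩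
  intro x hx
  exact hq.1 (by simpa using q.support_bypass_subset_support hx)

lemma steinerDist_le {H : G.Subgraph} (hH : H.Connected) {S : Set V} (hS : S ⊆ H.verts) :
    steinerDist G S ≤ H.edgeSet.ncard :=
  Nat.sInf_le ⟨H, hH, hS, rfl⟩

lemma steinerDist_le_ncard_edgeSet [Finite V] (S : Set V) :
    steinerDist G S ≤ G.edgeSet.ncard := by
  obtain h | ⟨_, H, hH, hS, rfl⟩ := Set.eq_empty_or_nonempty
    {m | ∃ H : G.Subgraph, H.Connected ∧ S ⊆ H.verts ∧ H.edgeSet.ncard = m}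
  · simp [steinerDist, h] -- `sInf ∅ = 0`
  · exact (steinerDist_le hH hS).trans (Set.ncard_le_ncard H.edgeSet_subset)

lemma Connected.exists_subgraph_steinerDist_eq (hG : G.Connected) (S : Set V) :
    ∃ H : G.Subgraph, H.Connected ∧ S ⊆ H.verts ∧ H.edgeSet.ncard = steinerDist G S :=
  Nat.sInf_mem
    (s := {m | ∃ H : G.Subgraph, H.Connected ∧ S ⊆ H.verts ∧ H.edgeSet.ncard = m})
    ⟨_, ⊤, hG.connected_subgraph_top, by simp, rfl⟩

lemma ncard_le_steinerDist_add_one [Finite V] (hG : G.Connected) {S A : Set V}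
    (h : ∀ H : G.Subgraph, H.Connected → S ⊆ H.verts → A ⊆ H.verts) :
    A.ncard ≤ steinerDist G S + 1 := by
  obtain ⟨H, hH, hS, hH_eq⟩ := hG.exists_subgraph_steinerDist_eq S
  rw [← hH_eq]
  calc A.ncard ≤ H.verts.ncard := Set.ncard_le_ncard (h H hH hS)
    _ ≤ H.edgeSet.ncard + 1 := hH.ncard_verts_le_ncard_edgeSet_add_one

lemma IsAcyclic.ncard_le_steinerDist_add_one_of_isPath [Finite V] (hG : G.Connected)
    (hac : G.IsAcyclic) {S A : Set V} {u v : V} {p : G.Walk u v} (hp : p.IsPath) (hu : u ∈ S)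
    (hv : v ∈ S) (hA : A ⊆ S ∪ {x | x ∈ p.support}) : A.ncard ≤ steinerDist G S + 1 :=
  ncard_le_steinerDist_add_one hG fun _ hH hS =>
    hA.trans (Set.union_subset hS (hac.support_subset_verts hH hp (hS hu) (hS hv)))

lemma exists_connected_subgraph_ncard_edgeSet_le_card_of_forall_adj [DecidableEq V] {c : V}
    (hc : ∀ v, v ≠ c → G.Adj c v) (S : Finset V) :
    ∃ H : G.Subgraph,
      H.Connected ∧ c ∈ H.verts ∧ ↑S ⊆ H.verts ∧ H.edgeSet.ncard ≤ S.card := by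
  induction S using Finset.induction_on with
  | empty =>
    exact ⟨G.singletonSubgraph c, Subgraph.singletonSubgraph_connected, by simp, by simp⟩
  | insert s S hs ih =>
    obtain ⟨H, hH, hcH, hSH, hcard⟩ := ih
    simp only [Finset.card_insert_of_notMem hs, Finset.coe_insert, Set.insert_subset_iff]
    by_cases hsc : s = c
    · exact ⟨H, hH, hcH, ⟨hsc ▸ hcH, hSH⟩, by omega⟩
    refine ⟨H ⊔ G.subgraphOfAdj (hc s hsc), Subgraph.connected_sup hH.preconnected
      (Subgraph.subgraphOfAdj_connected _).preconnected ⟨c, hcH, by simp⟩, Or.inl hcH,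
      ⟨Or.inr (by simp), fun x hx => Or.inl (hSH hx)⟩, ?_⟩
    rw [Subgraph.edgeSet_sup, edgeSet_subgraphOfAdj]
    grw [Set.ncard_union_le, Set.ncard_singleton, hcard]

lemma steinerDist_le_card_of_forall_adj {c : V} (hc : ∀ v, v ≠ c → G.Adj c v) (S : Finset V) :
    steinerDist G S ≤ S.card := by
  classical
  obtain ⟨H, hH, -, hSH, hcard⟩ :=
    exists_connected_subgraph_ncard_edgeSet_le_card_of_forall_adj hc S
  exact (steinerDist_le hH hSH).trans hcard

section sdiam

variable [Fintype V] {k m : ℕ}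

lemma steinerDist_le_sdiam {S : Finset V} (hS : S.card = k) : steinerDist G S ≤ sdiam G k :=
  le_csSup ⟨G.edgeSet.ncard, by rintro _ ⟨S, -, rfl⟩; exact steinerDist_le_ncard_edgeSet _⟩
    ⟨S, hS, rfl⟩

lemma sdiam_le (h : ∀ S : Finset V, S.card = k → steinerDist G S ≤ m) : sdiam G k ≤ m :=
  csSup_le' (by rintro _ ⟨S, hS, rfl⟩; exact h S hS)

end sdiam

theorem Connected.exists_forall_adj_of_forall_walk_three_backtracks (hG : G.Connected)
    (h : ∀ u a b v, G.Adj u a → G.Adj a b → G.Adj b v → u = b ∨ a = v) :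
    ∃ c, ∀ v, v ≠ c → G.Adj c v := by
  by_cases hE : ∃ a b, G.Adj a b
  swap
  · obtain ⟨c⟩ := hG.nonempty
    refine ⟨c, fun v hv => ?_⟩
    obtain ⟨p⟩ := hG.preconnected c v
    exact absurd ⟨c, _, p.adj_snd (Walk.not_nil_of_ne hv.symm)⟩ hE
  obtain ⟨c, b, hcb, hb⟩ : ∃ c b, G.Adj c b ∧ ∀ x, G.Adj b x → x = c := by
    obtain ⟨a, b, hab⟩ := hE
    by_cases hb : ∀ x, G.Adj b x → x = a
    · exact ⟨a, b, hab, hb⟩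
    push Not at hb
    obtain ⟨v, hbv, hva⟩ := hb
    exact ⟨b, a, hab.symm, fun u hau => (h u a b v hau.symm hab hbv).resolve_right hva.symm⟩
  -- `b` is a leaf at `c`, so a path `c x y` would give the non-backtracking walk `b c x y`.
  refine ⟨c, fun v hv => ?_⟩
  obtain ⟨p, hp⟩ := hG.exists_isPath c v
  match p, hp with
  | .nil, _ => exact absurd rfl hv
  | .cons hcv .nil, _ => exact hcv
  | .cons (v := x) hcx (.cons (v := y) hxy q), hp =>
    have hyc : y ≠ c := by
      rintro rfl
      simp [Walk.cons_isPath_iff] at hp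
    obtain rfl | rfl := h b c x y hcb.symm hcx hxy
    · exact absurd (hb y hxy) hyc
    · exact absurd rfl hyc

theorem sdiam_three_eq_three_of_forall_adj [Fintype V] (hG : G.Connected) (hac : G.IsAcyclic)
    (hcard : 4 ≤ Fintype.card V) {c : V} (hc : ∀ v, v ≠ c → G.Adj c v) : sdiam G 3 = 3 := by
  classical
  obtain ⟨L, hLc, hL⟩ := Finset.exists_subset_card_eq (s := Finset.univ.erase c) (n := 3)
    (by rw [Finset.card_erase_of_mem (Finset.mem_univ c), Finset.card_univ]; omega)
  obtain ⟨x, y, z, hxy, hxz, hyz, rfl⟩ := Finset.card_eq_three.mp hL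
  have hx : x ≠ c := Finset.ne_of_mem_erase (hLc (by simp))
  have hy : y ≠ c := Finset.ne_of_mem_erase (hLc (by simp))
  have hz : z ≠ c := Finset.ne_of_mem_erase (hLc (by simp))
  refine le_antisymm (sdiam_le fun S hS => hS ▸ steinerDist_le_card_of_forall_adj hc S)
    (le_trans ?_ (steinerDist_le_sdiam hL))
  have hp : (Walk.cons (hc x hx).symm (Walk.cons (hc y hy) Walk.nil)).IsPath := by
    simp [Walk.cons_isPath_iff, hx, hxy, Ne.symm hy]
  have h4 := hac.ncard_le_steinerDist_add_one_of_isPath hG hp (S := ↑({x, y, z} : Finset V))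
    (A := ↑({c, x, y, z} : Finset V)) (by simp) (by simp) (by intro; simp; tauto)
  have h4card : ({c, x, y, z} : Finset V).card = 4 := by grind
  rw [Set.ncard_coe_finset, h4card] at h4
  omega

theorem IsAcyclic.four_le_sdiam_three [Fintype V] (hG : G.Connected) (hac : G.IsAcyclic)
    (hcard : 5 ≤ Fintype.card V) {u a b v : V} (hua : G.Adj u a) (hab : G.Adj a b)
    (hbv : G.Adj b v) (hub : u ≠ b) (hav : a ≠ v) : 4 ≤ sdiam G 3 := by
  classical
  have huv : u ≠ v := by
    rintro rfl
    exact hac.cliqueFree le_rfl {u, a, b} (is3Clique_triple_iff.mpr ⟨hua, hbv.symm, hab⟩)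
  obtain ⟨w, -, hw⟩ := Finset.exists_mem_notMem_of_card_lt_card (s := {u, a, b, v})
    (t := Finset.univ) (Finset.card_le_four.trans_lt hcard)
  have hp : (Walk.cons hua (Walk.cons hab (Walk.cons hbv Walk.nil))).IsPath := by
    simp [Walk.cons_isPath_iff, hua.ne, hub, huv, hab.ne, hav, hbv.ne]
  have hS : ({u, v, w} : Finset V).card = 3 := by grind
  have h5 := hac.ncard_le_steinerDist_add_one_of_isPath hG hp (S := ↑({u, v, w} : Finset V))
    (A := ↑({u, a, b, v, w} : Finset V)) (by simp) (by simp) (by intro; simp; tauto)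
  have h5card : ({u, a, b, v, w} : Finset V).card = 5 := by grind [hua.ne, hab.ne, hbv.ne]
  rw [Set.ncard_coe_finset, h5card] at h5
  have := steinerDist_le_sdiam (G := G) hS
  omega

end SimpleGraph

theorem stmt10 {V : Type*} [Fintype V] (T : SimpleGraph V)
    (hconn : T.Connected) (hac : T.IsAcyclic) (hn : 5 ≤ Fintype.card V) :
    sdiam T 3 = 3 ↔ ∃ c : V, ∀ v : V, v ≠ c → T.Adj c v := by
  constructor
  · intro h3
    refine hconn.exists_forall_adj_of_forall_walk_three_backtracks fun u a b v hua hab hbv => ?_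
    by_contra! h
    have := hac.four_le_sdiam_three hconn hn hua hab hbv h.1 h.2
    omega
  · rintro ⟨c, hc⟩
    exact sdiam_three_eq_three_of_forall_adj hconn hac (by omega) hc
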